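/- arXiv:1403.0738 — 3 statements merged into one kernel-verified Lean document; each statement's English description precedes it below -/
import Mathlib

section
/- Let q ∈ ℍ be nonzero with conj-logarithm candidate L := ln(‖q‖) + (V(q)/‖V(q)‖)·arccos(S(q)/‖q‖), where V(q) ≠ 0. Then exp(L) = q. -/
/-!
Write `q = ‖q‖ (cos θ + u sin θ)` with `u = V(q)/‖V(q)‖` a unit pure quaternion and
`θ = arccos (S(q)/‖q‖)`; the identity `S(q)² + ‖V(q)‖² = ‖q‖²` gives `sin θ = ‖V(q)‖/‖q‖`.
Since `u² = -1`, the real line together with `u` spans a copy of `ℂ`, in which Euler's formula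
gives `exp (ln ‖q‖ + θ u) = ‖q‖ (cos θ + u sin θ) = q`.
-/

open Quaternion ComplexConjugate

noncomputable def toQ (z : ℂ) : ℍ[ℝ] := ⟨z.re, z.im, 0, 0⟩
def qi : ℍ[ℝ] := ⟨0, 1, 0, 0⟩
def qj : ℍ[ℝ] := ⟨0, 0, 1, 0⟩
def qk : ℍ[ℝ] := ⟨0, 0, 0, 1⟩

namespace Quaternion

theorem norm_sq_eq_re_sq_add_norm_im_sq (q : ℍ[ℝ]) : ‖q‖ ^ 2 = q.re ^ 2 + ‖q.im‖ ^ 2 := by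
  simp only [sq, ← normSq_eq_norm_mul_self, normSq_def', re_im, imI_im, imJ_im, imK_im]
  ring

theorem abs_re_le_norm (q : ℍ[ℝ]) : |q.re| ≤ ‖q‖ :=
  abs_le_of_sq_le_sq (by nlinarith [norm_sq_eq_re_sq_add_norm_im_sq q]) (norm_nonneg q)

theorem cos_arccos_re_div_norm (q : ℍ[ℝ]) :
    Real.cos (Real.arccos (q.re / ‖q‖)) = q.re / ‖q‖ := by
  have hbound : |q.re / ‖q‖| ≤ 1 := by
    rw [abs_div, abs_norm]
    exact div_le_one_of_le₀ (abs_re_le_norm q) (norm_nonneg q)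
  exact Real.cos_arccos (abs_le.mp hbound).1 (abs_le.mp hbound).2

theorem sin_arccos_re_div_norm {q : ℍ[ℝ]} (hq : q ≠ 0) :
    Real.sin (Real.arccos (q.re / ‖q‖)) = ‖q.im‖ / ‖q‖ := by
  have hnorm : ‖q‖ ≠ 0 := norm_ne_zero_iff.mpr hq
  have hsq : 1 - (q.re / ‖q‖) ^ 2 = (‖q.im‖ / ‖q‖) ^ 2 := by
    field_simp
    linarith [norm_sq_eq_re_sq_add_norm_im_sq q]
  rw [Real.sin_arccos, hsq, Real.sqrt_sq (by positivity)]

theorem exp_coe_add_smul_of_re_eq_zero (r θ : ℝ) {u : ℍ[ℝ]} (hre : u.re = 0) (hnorm : ‖u‖ = 1) :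
    NormedSpace.exp ((r : ℍ[ℝ]) + θ • u) =
      Real.exp r • ((Real.cos θ : ℍ[ℝ]) + Real.sin θ • u) := by
  have him : ((r : ℍ[ℝ]) + θ • u).im = θ • u := by
    ext <;> simp [hre]
  rw [exp_eq, him, re_add, re_coe, re_smul, hre, smul_zero, add_zero, ← Real.exp_eq_exp_ℝ,
    norm_smul, hnorm, mul_one, Real.norm_eq_abs, Real.cos_abs, smul_smul]
  congr 3
  obtain rfl | hθ := eq_or_ne θ 0
  · simp
  rcases abs_choice θ with h | h
  · rw [h, div_mul_cancel₀ _ hθ]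
  · rw [h, Real.sin_neg, neg_div_neg_eq, div_mul_cancel₀ _ hθ]

theorem norm_smul_cos_add_sin_smul_eq_self {q : ℍ[ℝ]} (hq : q ≠ 0) :
    ‖q‖ • ((Real.cos (Real.arccos (q.re / ‖q‖)) : ℍ[ℝ]) +
      Real.sin (Real.arccos (q.re / ‖q‖)) • (‖q.im‖⁻¹ • q.im)) = q := by
  have hnorm : ‖q‖ ≠ 0 := norm_ne_zero_iff.mpr hq
  rw [cos_arccos_re_div_norm, sin_arccos_re_div_norm hq, smul_add, smul_smul, smul_smul,
    ← coe_smul, smul_eq_mul, mul_div_cancel₀ _ hnorm, mul_div_cancel₀ _ hnorm]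
  obtain him | him := eq_or_ne q.im 0
  · simpa [him] using re_add_im q
  · rw [mul_inv_cancel₀ (norm_ne_zero_iff.mpr him), one_smul, re_add_im]

end Quaternion

theorem exp_log_quaternion_general (q : ℍ[ℝ]) (him : q.im ≠ 0) :
    NormedSpace.exp
      (((Real.log ‖q‖ : ℝ) : ℍ[ℝ]) +
        Real.arccos (q.re / ‖q‖) • (‖q.im‖⁻¹ • q.im)) = q := by
  have hq : q ≠ 0 := fun h => him (by simp [h])
  rw [exp_coe_add_smul_of_re_eq_zero _ _ (by simp) (by simp [norm_smul, him]),
    Real.exp_log (norm_pos_iff.mpr hq), norm_smul_cos_add_sin_smul_eq_self hq]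

theorem exp_log_quaternion (q : ℍ[ℝ]) (hq : q ≠ 0) (him : q.im ≠ 0) :
    NormedSpace.exp
      (((Real.log ‖q‖ : ℝ) : ℍ[ℝ]) +
        Real.arccos (q.re / ‖q‖) • (‖q.im‖⁻¹ • q.im)) = q :=
  exp_log_quaternion_general q him
end

section
/- If q = A·e^{Bj} with A = a + ib ∈ ℂ nonzero and B = c + id ∈ ℂ, and writing q = q_r + i q_i + j q_j + k q_k, then ‖q‖ = ‖A‖ and q_r + i·q_i = A·cos(‖B‖) (as complex numbers). -/
open Quaternion ComplexConjugate

/-!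
The vector `c j + d k` is purely imaginary with vanishing `i`-component, so
`exp (c j + d k) = cos r + (sin r / r) (c j + d k)` with `r = √(c² + d²)` has norm `1` and
`ℂ`-part `cos r`. Left multiplication by a complex number `A` multiplies norms by `‖A‖` and acts
on the `ℂ`-part (the `re` and `imI` components) as multiplication by `A`.
-/

namespace Quaternion

theorem norm_eq_sqrt_sum_sq (q : ℍ[ℝ]) :
    ‖q‖ = √(q.re ^ 2 + q.imI ^ 2 + q.imJ ^ 2 + q.imK ^ 2) := by
  rw [← normSq_def', normSq_eq_norm_mul_self, Real.sqrt_mul_self (norm_nonneg q)]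

theorem norm_coeComplex (z : ℂ) : ‖(z : ℍ[ℝ])‖ = ‖z‖ := by
  rw [norm_eq_sqrt_sum_sq, Complex.norm_def, Complex.normSq_apply]
  simp only [re_coeComplex, imI_coeComplex, imJ_coeComplex, imK_coeComplex]
  ring_nf

theorem mk_re_imI_coeComplex_mul (z : ℂ) (p : ℍ[ℝ]) :
    (⟨(z * p).re, (z * p).imI⟩ : ℂ) = z * ⟨p.re, p.imI⟩ := by
  apply Complex.ext <;> simp

theorem norm_exp_of_re_eq_zero {q : ℍ[ℝ]} (hq : q.re = 0) : ‖NormedSpace.exp q‖ = 1 := by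
  rw [norm_exp, hq, NormedSpace.exp_zero, norm_one]

theorem mk_re_imI_exp {q : ℍ[ℝ]} (hre : q.re = 0) (hI : q.imI = 0) :
    (⟨(NormedSpace.exp q).re, (NormedSpace.exp q).imI⟩ : ℂ) = Real.cos ‖q‖ := by
  rw [exp_of_re_eq_zero q hre]
  apply Complex.ext <;> simp [hre, hI, Complex.cos_ofReal_re]

end Quaternion

theorem toQ_eq_coeComplex (z : ℂ) : toQ z = (z : ℍ[ℝ]) := rfl

section

variable (c d : ℝ)

theorem re_smul_qj_add_smul_qk : (c • qj + d • qk).re = 0 := by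
  simp only [re_add, re_smul]; simp [qj, qk]

theorem imI_smul_qj_add_smul_qk : (c • qj + d • qk).imI = 0 := by
  simp only [imI_add, imI_smul]; simp [qj, qk]

theorem norm_smul_qj_add_smul_qk : ‖c • qj + d • qk‖ = √(c ^ 2 + d ^ 2) := by
  rw [Quaternion.norm_eq_sqrt_sum_sq]
  simp only [re_add, re_smul, imI_add, imI_smul, imJ_add, imJ_smul, imK_add, imK_smul]
  simp [qj, qk]

end

theorem polar_norm_and_first_pair_general (A : ℂ) (c d : ℝ) (q : ℍ[ℝ])
    (hq : q = toQ A * NormedSpace.exp (c • qj + d • qk)) :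
    ‖q‖ = ‖A‖ ∧
    (⟨q.re, q.imI⟩ : ℂ) = A * Real.cos (Real.sqrt (c ^ 2 + d ^ 2)) := by
  subst hq
  rw [toQ_eq_coeComplex]
  constructor
  · rw [norm_mul, norm_coeComplex, norm_exp_of_re_eq_zero (re_smul_qj_add_smul_qk c d), mul_one]
  · rw [mk_re_imI_coeComplex_mul, mk_re_imI_exp (re_smul_qj_add_smul_qk c d)
      (imI_smul_qj_add_smul_qk c d), norm_smul_qj_add_smul_qk]

theorem polar_norm_and_first_pair (A : ℂ) (hA : A ≠ 0) (c d : ℝ) (q : ℍ[ℝ])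
    (hq : q = toQ A * NormedSpace.exp (c • qj + d • qk)) :
    ‖q‖ = ‖A‖ ∧
    (⟨q.re, q.imI⟩ : ℂ) = A * Real.cos (Real.sqrt (c ^ 2 + d ^ 2)) :=
  polar_norm_and_first_pair_general A c d q hq
end

section
/- If e^{Bj} = α + jβ + kγ with B = c + id, 0 < ‖B‖ < π, and β² + γ² > 0, then B can be recovered as B = ((β + iγ)/‖β + iγ‖)·arccos(α), i.e., c = (β/√(β²+γ²))·arccos(α) and d = (γ/√(β²+γ²))·arccos(α). -/
open Quaternion ComplexConjugate

/-!
With `r = ‖B‖ ∈ (0, π)`, the vector `(β, γ)` is the unit vector `(c, d) / r` scaled by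
`sin r > 0`, so its norm is `sin r` and its direction is that of `(c, d)`; and
`arccos α = arccos (cos r) = r` because `r ∈ [0, π]`. Multiplying the direction by `r`
gives back `(c, d)`.
-/

namespace PhaseRecovery

lemma sq_add_sq_div_norm_mul {c d s : ℝ} (hr : Real.sqrt (c ^ 2 + d ^ 2) ≠ 0) :
    (c / Real.sqrt (c ^ 2 + d ^ 2) * s) ^ 2 + (d / Real.sqrt (c ^ 2 + d ^ 2) * s) ^ 2 = s ^ 2 := by
  have hr2 : Real.sqrt (c ^ 2 + d ^ 2) ^ 2 = c ^ 2 + d ^ 2 := Real.sq_sqrt (by positivity)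
  field_simp
  rw [hr2]

lemma sqrt_sq_add_sq_div_norm_mul {c d s : ℝ} (hr : Real.sqrt (c ^ 2 + d ^ 2) ≠ 0)
    (hs : 0 ≤ s) :
    Real.sqrt ((c / Real.sqrt (c ^ 2 + d ^ 2) * s) ^ 2
      + (d / Real.sqrt (c ^ 2 + d ^ 2) * s) ^ 2) = s := by
  rw [sq_add_sq_div_norm_mul hr, Real.sqrt_sq hs]

end PhaseRecovery

open PhaseRecovery in
theorem phase_recovery_general (c d : ℝ)
    (h0 : 0 < Real.sqrt (c ^ 2 + d ^ 2)) (hπ : Real.sqrt (c ^ 2 + d ^ 2) < Real.pi)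
    (α β γ : ℝ)
    (hα : α = Real.cos (Real.sqrt (c ^ 2 + d ^ 2)))
    (hβ : β = (c / Real.sqrt (c ^ 2 + d ^ 2)) * Real.sin (Real.sqrt (c ^ 2 + d ^ 2)))
    (hγ : γ = (d / Real.sqrt (c ^ 2 + d ^ 2)) * Real.sin (Real.sqrt (c ^ 2 + d ^ 2))) :
    c = (β / Real.sqrt (β ^ 2 + γ ^ 2)) * Real.arccos α ∧
    d = (γ / Real.sqrt (β ^ 2 + γ ^ 2)) * Real.arccos α := by
  have hsin : 0 < Real.sin (Real.sqrt (c ^ 2 + d ^ 2)) := Real.sin_pos_of_pos_of_lt_pi h0 hπ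
  have hnorm : Real.sqrt (β ^ 2 + γ ^ 2) = Real.sin (Real.sqrt (c ^ 2 + d ^ 2)) := by
    rw [hβ, hγ, sqrt_sq_add_sq_div_norm_mul h0.ne' hsin.le]
  have harccos : Real.arccos α = Real.sqrt (c ^ 2 + d ^ 2) := by
    rw [hα, Real.arccos_cos h0.le hπ.le]
  rw [hnorm, harccos, hβ, hγ]
  have hr : Real.sqrt (c ^ 2 + d ^ 2) ≠ 0 := h0.ne'
  have hs : Real.sin (Real.sqrt (c ^ 2 + d ^ 2)) ≠ 0 := hsin.ne'
  constructor <;> field_simp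

theorem phase_recovery (c d : ℝ)
    (h0 : 0 < Real.sqrt (c ^ 2 + d ^ 2)) (hπ : Real.sqrt (c ^ 2 + d ^ 2) < Real.pi)
    (α β γ : ℝ)
    (hα : α = Real.cos (Real.sqrt (c ^ 2 + d ^ 2)))
    (hβ : β = (c / Real.sqrt (c ^ 2 + d ^ 2)) * Real.sin (Real.sqrt (c ^ 2 + d ^ 2)))
    (hγ : γ = (d / Real.sqrt (c ^ 2 + d ^ 2)) * Real.sin (Real.sqrt (c ^ 2 + d ^ 2)))
    (hβγ : 0 < β ^ 2 + γ ^ 2) :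
    c = (β / Real.sqrt (β ^ 2 + γ ^ 2)) * Real.arccos α ∧
    d = (γ / Real.sqrt (β ^ 2 + γ ^ 2)) * Real.arccos α :=
  phase_recovery_general c d h0 hπ α β γ hα hβ hγ
end
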